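/- arXiv:2201.09343 — 2 statements merged into one kernel-verified Lean document; each statement's English description precedes it below -/
import Mathlib

section
/- Every bounded, twice continuously differentiable function w : ℝ → ℝ satisfying the homogeneous linearized equation w''(ρ) = f''(θ₀(ρ)) w(ρ) for all ρ ∈ ℝ is a constant multiple of θ₀'; explicitly, w(ρ) = 2 w(0) θ₀'(ρ) for all ρ ∈ ℝ (note θ₀'(0) = 1/2). -/
/-- The optimal profile `θ₀(ρ) = tanh(ρ/2)`. -/
noncomputable def optimalProfile : ℝ → ℝ := fun ρ => Real.tanh (ρ / 2)

/-- `Uaux = θ₀'` explicitly. -/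
noncomputable def Uaux : ℝ → ℝ := fun ρ => (1 - Real.tanh (ρ / 2) ^ 2) / 2

lemma hasDerivAt_tanh' (x : ℝ) : HasDerivAt Real.tanh (1 - Real.tanh x ^ 2) x := by
  have hc := (Real.cosh_pos x).ne'
  have h := (Real.hasDerivAt_sinh x).div (Real.hasDerivAt_cosh x) hc
  have he : Real.tanh = fun x => Real.sinh x / Real.cosh x := by
    funext y; exact Real.tanh_eq_sinh_div_cosh y
  rw [he]
  refine h.congr_deriv ?_
  have h2 := Real.cosh_sq_sub_sinh_sq x
  field_simp

lemma hasDerivAt_profile (ρ : ℝ) : HasDerivAt optimalProfile (Uaux ρ) ρ := by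
  have h2 : HasDerivAt (fun ρ : ℝ => ρ / 2) (1 / 2) ρ := by
    simpa using (hasDerivAt_id ρ).div_const 2
  have h := (hasDerivAt_tanh' (ρ / 2)).comp ρ h2
  have hrfl : optimalProfile = fun ρ : ℝ => Real.tanh (ρ / 2) := rfl
  rw [hrfl]
  refine h.congr_deriv ?_
  simp [Uaux]; ring

lemma Uaux_eq (ρ : ℝ) : Uaux ρ = 1 / (2 * Real.cosh (ρ / 2) ^ 2) := by
  have hc := (Real.cosh_pos (ρ / 2)).ne'
  have h2 := Real.cosh_sq_sub_sinh_sq (ρ / 2)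
  simp only [Uaux, Real.tanh_eq_sinh_div_cosh]
  field_simp
  nlinarith [Real.cosh_pos (ρ / 2)]

lemma Uaux_pos (ρ : ℝ) : 0 < Uaux ρ := by
  rw [Uaux_eq]
  positivity

lemma exp_eq_sq (ρ : ℝ) : Real.exp ρ = Real.exp (ρ / 2) ^ 2 := by
  rw [← Real.exp_nat_mul]; norm_num; ring_nf

lemma exp_mul_exp_neg (ρ : ℝ) : Real.exp (-ρ) * Real.exp ρ = 1 := by
  rw [← Real.exp_add]; simp

lemma Uaux_le (ρ : ℝ) : Uaux ρ ≤ 2 * Real.exp (-ρ) := by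
  rw [Uaux_eq]
  have hcosh : Real.exp (ρ / 2) / 2 ≤ Real.cosh (ρ / 2) := by
    rw [Real.cosh_eq]
    have := (Real.exp_pos (-(ρ / 2))).le
    linarith
  have hsq : Real.exp ρ / 4 ≤ Real.cosh (ρ / 2) ^ 2 := by
    have he := exp_eq_sq ρ
    nlinarith [Real.exp_pos (ρ / 2), Real.cosh_pos (ρ / 2)]
  have hpos : (0:ℝ) < 2 * Real.cosh (ρ / 2) ^ 2 := by positivity
  rw [div_le_iff₀ hpos]
  nlinarith [exp_mul_exp_neg ρ, Real.exp_pos (-ρ), Real.exp_pos ρ]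

lemma Uaux_ge (ρ : ℝ) (hρ : 0 ≤ ρ) : Real.exp (-ρ) / 2 ≤ Uaux ρ := by
  rw [Uaux_eq]
  have hcosh : Real.cosh (ρ / 2) ≤ Real.exp (ρ / 2) := by
    rw [Real.cosh_eq]
    have := Real.exp_le_exp.mpr (by linarith : -(ρ / 2) ≤ ρ / 2)
    linarith
  have hsq : Real.cosh (ρ / 2) ^ 2 ≤ Real.exp ρ := by
    have he := exp_eq_sq ρ
    nlinarith [Real.cosh_pos (ρ / 2)]
  have hpos : (0:ℝ) < 2 * Real.cosh (ρ / 2) ^ 2 := by positivity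
  rw [div_le_div_iff₀ (by norm_num : (0:ℝ) < 2) hpos]
  nlinarith [exp_mul_exp_neg ρ, Real.exp_pos (-ρ), Real.exp_pos ρ]

/-- Key growth lemma: if `g' = (k/2)/U²` with `k > 0` and `w = g·U`, then `w` is unbounded. -/
lemma growth_aux (w g : ℝ → ℝ) (C k : ℝ) (hC : ∀ ρ, |w ρ| ≤ C) (hk : 0 < k)
    (hg : ∀ ρ, HasDerivAt g ((k / 2) / Uaux ρ ^ 2) ρ)
    (hwg : ∀ ρ, w ρ = g ρ * Uaux ρ) : False := by
  set h : ℝ → ℝ := fun ρ => g ρ - k / 16 * Real.exp (2 * ρ) with hdef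
  have hh : ∀ ρ, HasDerivAt h ((k / 2) / Uaux ρ ^ 2 - k / 8 * Real.exp (2 * ρ)) ρ := by
    intro ρ
    have he : HasDerivAt (fun ρ : ℝ => Real.exp (2 * ρ)) (Real.exp (2 * ρ) * 2) ρ :=
      (Real.hasDerivAt_exp (2 * ρ)).comp ρ (by simpa using (hasDerivAt_id ρ).const_mul 2)
    have := (hg ρ).sub (he.const_mul (k / 16))
    refine this.congr_deriv ?_
    ring
  have hh_nonneg : ∀ ρ, 0 ≤ (k / 2) / Uaux ρ ^ 2 - k / 8 * Real.exp (2 * ρ) := by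
    intro ρ
    have hUle := Uaux_le ρ
    have hUpos := Uaux_pos ρ
    have he2 : Real.exp (2 * ρ) = Real.exp ρ ^ 2 := by
      rw [two_mul, Real.exp_add, sq]
    have hen2 : Real.exp (-ρ) ^ 2 * Real.exp ρ ^ 2 = 1 := by
      have := exp_mul_exp_neg ρ; nlinarith
    have hUsq : Uaux ρ ^ 2 ≤ 4 * Real.exp (-ρ) ^ 2 := by
      nlinarith [Real.exp_pos (-ρ)]
    have hUsqpos : (0:ℝ) < Uaux ρ ^ 2 := by positivity
    have h4 : Real.exp ρ ^ 2 * Uaux ρ ^ 2 ≤ 4 := by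
      nlinarith [mul_le_mul_of_nonneg_left hUsq
        (le_of_lt (show (0:ℝ) < Real.exp ρ ^ 2 by positivity)), hen2]
    rw [sub_nonneg, he2, le_div_iff₀ hUsqpos]
    nlinarith [h4, hk]
  have hmono : Monotone h :=
    monotone_of_deriv_nonneg (fun x => (hh x).differentiableAt)
      (fun x => by rw [(hh x).deriv]; exact hh_nonneg x)
  -- choose a large point
  have hC0 : 0 ≤ C := le_trans (abs_nonneg _) (hC 0)
  set A : ℝ := g 0 - k / 16 with hA
  set M : ℝ := max 1 (16 * (|A| + 2 * C + 2) / k) with hM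
  have hM1 : (1:ℝ) ≤ M := le_max_left _ _
  have hMpos : (0:ℝ) < M := lt_of_lt_of_le one_pos hM1
  set ρ : ℝ := Real.log M with hρdef
  have hρ0 : 0 ≤ ρ := Real.log_nonneg hM1
  have hexp : Real.exp ρ = M := Real.exp_log hMpos
  have he2 : Real.exp (2 * ρ) = M ^ 2 := by
    rw [two_mul, Real.exp_add, hexp, sq]
  have hgρ : A + k / 16 * M ^ 2 ≤ g ρ := by
    have hm := hmono hρ0
    simp only [hdef] at hm
    rw [he2] at hm
    norm_num at hm
    linarith
  have hkM : 16 * (|A| + 2 * C + 2) / k ≤ M := le_max_right _ _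
  have hkM' : |A| + 2 * C + 2 ≤ k * M / 16 := by
    rw [div_le_iff₀ hk] at hkM; linarith
  have e1 : (|A| + 2 * C + 2) * M ≤ k / 16 * M ^ 2 := by
    nlinarith [mul_le_mul_of_nonneg_right hkM' hMpos.le]
  have e2 : |A| ≤ |A| * M := by
    nlinarith [mul_le_mul_of_nonneg_left hM1 (abs_nonneg A)]
  have hgρ2 : (2 * C + 2) * M ≤ g ρ := by
    clear_value A M ρ
    nlinarith [neg_abs_le A, e1, e2]
  have hUge := Uaux_ge ρ hρ0
  have hexpneg : Real.exp (-ρ) = 1 / M := by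
    rw [Real.exp_neg, hexp, inv_eq_one_div]
  have hUρ : 1 / (2 * M) ≤ Uaux ρ := by
    rw [hexpneg] at hUge
    have : 1 / M / 2 = 1 / (2 * M) := by
      rw [div_div, mul_comm]
    linarith
  have hfin : C + 1 ≤ w ρ := by
    rw [hwg ρ]
    have h6 : (2 * C + 2) * M * Uaux ρ ≤ g ρ * Uaux ρ :=
      mul_le_mul_of_nonneg_right hgρ2 (Uaux_pos ρ).le
    have h7 : (2 * C + 2) * M * (1 / (2 * M)) ≤ (2 * C + 2) * M * Uaux ρ :=
      mul_le_mul_of_nonneg_left hUρ (by positivity)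
    have h8 : (2 * C + 2) * M * (1 / (2 * M)) = C + 1 := by
      field_simp
    linarith
  linarith [le_abs_self (w ρ), hC ρ, hfin]

/-- Every bounded, twice continuously differentiable solution `w` of the homogeneous
linearized Allen–Cahn equation `w'' = f''(θ₀) w` (with `f''(c) = (1/2)(3c² − 1)`)
is a constant multiple of `θ₀'`; explicitly `w(ρ) = 2 w(0) θ₀'(ρ)` (note `θ₀'(0) = 1/2`). -/
theorem statement6 (w : ℝ → ℝ) (hw : ContDiff ℝ 2 w)
    (hbdd : ∃ C : ℝ, ∀ ρ : ℝ, |w ρ| ≤ C)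
    (hODE : ∀ ρ : ℝ,
      deriv (deriv w) ρ = (1 / 2) * (3 * (optimalProfile ρ) ^ 2 - 1) * w ρ) :
    ∀ ρ : ℝ, w ρ = 2 * w 0 * deriv optimalProfile ρ := by
  obtain ⟨C, hC⟩ := hbdd
  have hw1 : Differentiable ℝ w := hw.differentiable (by norm_num)
  have hw' : ContDiff ℝ (1 + 1 : WithTop ℕ∞) w := by
    have : ((1 + 1 : WithTop ℕ∞)) = 2 := by norm_num
    rw [this]; exact hw
  have hw2 : Differentiable ℝ (deriv w) :=
    ((contDiff_succ_iff_deriv.mp hw').2.2).differentiable one_ne_zero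
  -- first and second derivatives of Uaux
  have hU1 : ∀ ρ : ℝ, HasDerivAt Uaux (-Real.tanh (ρ / 2) * Uaux ρ) ρ := by
    intro ρ
    have hθ : HasDerivAt (fun ρ : ℝ => Real.tanh (ρ / 2)) (Uaux ρ) ρ := hasDerivAt_profile ρ
    have h := ((hasDerivAt_const ρ (1 : ℝ)).sub (hθ.pow 2)).div_const 2
    have he : Uaux = fun ρ : ℝ => (1 - Real.tanh (ρ / 2) ^ 2) / 2 := rfl
    rw [he]
    refine h.congr_deriv ?_
    simp only [pow_one]
    have he2 : Uaux ρ = (1 - Real.tanh (ρ / 2) ^ 2) / 2 := rfl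
    rw [he2]; ring
  have hU2 : ∀ ρ : ℝ,
      HasDerivAt (fun ρ : ℝ => -Real.tanh (ρ / 2) * Uaux ρ)
        ((1 / 2) * (3 * Real.tanh (ρ / 2) ^ 2 - 1) * Uaux ρ) ρ := by
    intro ρ
    have hθ : HasDerivAt (fun ρ : ℝ => Real.tanh (ρ / 2)) (Uaux ρ) ρ := hasDerivAt_profile ρ
    have h := (hθ.neg).mul (hU1 ρ)
    refine h.congr_deriv ?_
    simp only [Pi.neg_apply]
    have he2 : Uaux ρ = (1 - Real.tanh (ρ / 2) ^ 2) / 2 := rfl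
    rw [he2]; ring
  -- the Wronskian is constant
  set W : ℝ → ℝ :=
    fun ρ => w ρ * (-Real.tanh (ρ / 2) * Uaux ρ) - deriv w ρ * Uaux ρ with hWdef
  have hWd : ∀ ρ, HasDerivAt W 0 ρ := by
    intro ρ
    have h1 : HasDerivAt w (deriv w ρ) ρ := (hw1 ρ).hasDerivAt
    have h2 : HasDerivAt (deriv w) (deriv (deriv w) ρ) ρ := (hw2 ρ).hasDerivAt
    have h := (h1.mul (hU2 ρ)).sub (h2.mul (hU1 ρ))
    refine h.congr_deriv ?_
    rw [hODE ρ]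
    have hop : optimalProfile ρ = Real.tanh (ρ / 2) := rfl
    rw [hop]
    ring
  have hWc : ∀ ρ, W ρ = W 0 := fun ρ =>
    is_const_of_deriv_eq_zero (fun x => (hWd x).differentiableAt)
      (fun x => (hWd x).deriv) ρ 0
  have hU0 : Uaux 0 = 1 / 2 := by
    have : Uaux 0 = (1 - Real.tanh (0 / 2) ^ 2) / 2 := rfl
    rw [this]; norm_num
  have hW0 : W 0 = -(deriv w 0) / 2 := by
    rw [hWdef]
    simp only [hU0]
    norm_num [Real.tanh_zero]
    ring
  -- derivative of w / Uaux
  have hg : ∀ ρ : ℝ,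
      HasDerivAt (fun ρ => w ρ / Uaux ρ) ((deriv w 0 / 2) / Uaux ρ ^ 2) ρ := by
    intro ρ
    have h1 : HasDerivAt w (deriv w ρ) ρ := (hw1 ρ).hasDerivAt
    have h := h1.div (hU1 ρ) (Uaux_pos ρ).ne'
    refine h.congr_deriv ?_
    have hw'' := hWc ρ
    rw [hW0, hWdef] at hw''
    simp only at hw''
    have hnum : deriv w ρ * Uaux ρ - w ρ * (-Real.tanh (ρ / 2) * Uaux ρ) = deriv w 0 / 2 := by
      linarith
    rw [hnum]
  rcases lt_trichotomy (deriv w 0) 0 with hneg | hzero | hpos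
  · exfalso
    refine growth_aux (fun ρ => -w ρ) (fun ρ => -(w ρ / Uaux ρ)) C (-(deriv w 0))
      (fun ρ => by simpa using hC ρ) (by linarith) (fun ρ => ?_) (fun ρ => ?_)
    · have h := (hg ρ).neg
      refine h.congr_deriv ?_
      ring
    · rw [neg_mul, div_mul_cancel₀ _ (Uaux_pos ρ).ne']
  · intro ρ
    have hgc : w ρ / Uaux ρ = w 0 / Uaux 0 :=
      is_const_of_deriv_eq_zero
        (fun x => (hg x).differentiableAt)
        (fun x => by rw [(hg x).deriv, hzero]; simp) ρ 0
    have hderiv : deriv optimalProfile ρ = Uaux ρ := (hasDerivAt_profile ρ).deriv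
    rw [hderiv]
    rw [hU0, div_eq_iff (Uaux_pos ρ).ne'] at hgc
    rw [hgc]; ring
  · exact absurd
      (growth_aux w (fun ρ => w ρ / Uaux ρ) C (deriv w 0) hC hpos hg
        (fun ρ => (div_mul_cancel₀ _ (Uaux_pos ρ).ne').symm)) id
end

section
/- Let 0 < m ≤ M, let a : ℝ → ℝ be continuously differentiable with m ≤ a(ρ) ≤ M for all ρ, and let B : ℝ → ℝ be continuous with |B(ρ)| ≤ C₀ e^{−α|ρ|} for all ρ ∈ ℝ, for some α, C₀ > 0, and assume ∫_ℝ B(ρ) dρ = 0. Then the function w_*(ρ) := ∫₀^ρ a(r)^{−1} (∫_{−∞}^r B(s) ds) dr is a bounded, twice continuously differentiable solution of (a w')' = B on ℝ, and every bounded, twice continuously differentiable solution w of (a w')' = B on ℝ is of the form w = w_* + c for some constant c ∈ ℝ. -/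
open MeasureTheory

open Set Real

lemma expIoi_int {α : ℝ} (hα : 0 < α) (c : ℝ) :
    ∫ x in Set.Ioi c, Real.exp (-(α * x)) = Real.exp (-(α * c)) / α := by
  have h := integral_comp_mul_left_Ioi (fun x => Real.exp (-x)) c hα
  simp only [smul_eq_mul] at h
  rw [h, integral_exp_neg_Ioi, div_eq_inv_mul]

lemma expIoi_intOn {α : ℝ} (hα : 0 < α) (c : ℝ) :
    IntegrableOn (fun x => Real.exp (-(α * x))) (Set.Ioi c) := by
  simpa [neg_mul] using exp_neg_integrableOn_Ioi c hα

lemma expIic_intOn {α : ℝ} (hα : 0 < α) (c : ℝ) :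
    IntegrableOn (fun x => Real.exp (α * x)) (Set.Iic c) := by
  rw [← Measure.map_neg_eq_self (volume : Measure ℝ)]
  have m : MeasurableEmbedding fun x : ℝ => -x := (Homeomorph.neg ℝ).measurableEmbedding
  rw [m.integrableOn_map_iff]
  have : ((fun x : ℝ => -x) ⁻¹' Set.Iic c) = Set.Ici (-c) := by ext x; simp [neg_le]
  rw [this]
  have : ((fun x => Real.exp (α * x)) ∘ fun x : ℝ => -x) = fun x => Real.exp (-(α * x)) := by
    ext x; simp
  rw [this, integrableOn_Ici_iff_integrableOn_Ioi]
  exact expIoi_intOn hα _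

lemma expIic_int {α : ℝ} (hα : 0 < α) (c : ℝ) :
    ∫ x in Set.Iic c, Real.exp (α * x) = Real.exp (α * c) / α := by
  have h := integral_comp_neg_Iic c (fun x => Real.exp (-(α * x)))
  rw [show (fun x : ℝ => Real.exp (-(α * -x))) = fun x : ℝ => Real.exp (α * x) by ext x; ring_nf] at h
  rw [h, expIoi_int hα]; ring_nf

lemma expabs_int {α : ℝ} (hα : 0 < α) :
    Integrable (fun x : ℝ => Real.exp (-α * |x|)) := by
  have h1 : IntegrableOn (fun x : ℝ => Real.exp (-α * |x|)) (Set.Iic 0) := by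
    apply ((expIic_intOn hα 0).congr_fun (fun x hx => ?_) measurableSet_Iic)
    simp only [Set.mem_Iic] at hx
    rw [abs_of_nonpos hx]; ring_nf
  have h2 : IntegrableOn (fun x : ℝ => Real.exp (-α * |x|)) (Set.Ioi 0) := by
    apply ((expIoi_intOn hα 0).congr_fun (fun x hx => ?_) measurableSet_Ioi)
    simp only [Set.mem_Ioi] at hx
    rw [abs_of_pos hx]; ring_nf
  have := h1.union h2
  rw [Set.Iic_union_Ioi] at this
  exact integrableOn_univ.mp this

/-- Structure of bounded solutions of `(a w')' = B` (Lemma A.2 of the paper, fixed parameter):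
if `∫_ℝ B dρ = 0`, then `w_*(ρ) = ∫₀^ρ a(r)⁻¹ (∫_{−∞}^r B(s) ds) dr` is a bounded, twice
continuously differentiable solution of `(a w')' = B` on `ℝ`, and every bounded, twice
continuously differentiable solution is of the form `w_* + c` for a constant `c`. -/
theorem statement10 (m M α C₀ : ℝ) (hm : 0 < m) (hmM : m ≤ M) (hα : 0 < α) (hC₀ : 0 < C₀)
    (a : ℝ → ℝ) (ha : ContDiff ℝ 1 a) (habdd : ∀ ρ : ℝ, m ≤ a ρ ∧ a ρ ≤ M)
    (B : ℝ → ℝ) (hB : Continuous B)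
    (hBdecay : ∀ ρ : ℝ, |B ρ| ≤ C₀ * Real.exp (-α * |ρ|))
    (hcomp : (∫ ρ : ℝ, B ρ) = 0)
    (wstar : ℝ → ℝ)
    (hwstar : ∀ ρ : ℝ, wstar ρ = ∫ r in (0:ℝ)..ρ, (a r)⁻¹ * ∫ s in Set.Iic r, B s) :
    ((∃ C : ℝ, ∀ ρ : ℝ, |wstar ρ| ≤ C) ∧
      ContDiff ℝ 2 wstar ∧
      (∀ ρ : ℝ, deriv (fun r => a r * deriv wstar r) ρ = B ρ)) ∧
    (∀ w : ℝ → ℝ,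
      (∃ C : ℝ, ∀ ρ : ℝ, |w ρ| ≤ C) →
      ContDiff ℝ 2 w →
      (∀ ρ : ℝ, deriv (fun r => a r * deriv w r) ρ = B ρ) →
      ∃ c : ℝ, ∀ ρ : ℝ, w ρ = wstar ρ + c) := by
  have hane : ∀ x, a x ≠ 0 := fun x => (lt_of_lt_of_le hm (habdd x).1).ne'
  have haC : Continuous a := ha.continuous
  -- integrability of B
  have hBint : Integrable B := by
    refine ((expabs_int hα).const_mul C₀).mono' hB.aestronglyMeasurable ?_
    exact ae_of_all _ fun x => by simpa using hBdecay x
  -- G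
  set G : ℝ → ℝ := fun r => ∫ s in Set.Iic r, B s with hGdef
  have hGeq : G = fun r => (∫ s in Set.Iic (0:ℝ), B s) + ∫ s in (0:ℝ)..r, B s := by
    funext r
    rw [← intervalIntegral.integral_Iic_sub_Iic hBint.integrableOn hBint.integrableOn]
    ring
  have hGderiv : ∀ r, HasDerivAt G (B r) r := by
    intro r
    rw [hGeq]
    exact (intervalIntegral.integral_hasDerivAt_right hBint.intervalIntegrable
      (hB.stronglyMeasurable.stronglyMeasurableAtFilter) hB.continuousAt).const_add _
  have hGcont : Continuous G := by
    have : Differentiable ℝ G := fun r => (hGderiv r).differentiableAt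
    exact this.continuous
  -- bound on G
  have hGbound : ∀ r, |G r| ≤ C₀ / α * Real.exp (-α * |r|) := by
    intro r
    rcases le_total r 0 with hr | hr
    · have hb : ∀ x ∈ Set.Iic r, ‖B x‖ ≤ C₀ * Real.exp (α * x) := by
        intro x hx
        simp only [Set.mem_Iic] at hx
        have h := hBdecay x
        rw [abs_of_nonpos (hx.trans hr)] at h
        rw [Real.norm_eq_abs, show α * x = -α * -x by ring]
        exact h
      have h1 : ‖∫ s in Set.Iic r, B s‖ ≤ ∫ x in Set.Iic r, C₀ * Real.exp (α * x) := by
        refine norm_integral_le_of_norm_le ((expIic_intOn hα r).const_mul C₀) ?_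
        exact (ae_restrict_iff' measurableSet_Iic).2 (ae_of_all _ hb)
      rw [Real.norm_eq_abs] at h1
      calc |G r| ≤ ∫ x in Set.Iic r, C₀ * Real.exp (α * x) := h1
        _ = C₀ * (Real.exp (α * r) / α) := by rw [integral_const_mul, expIic_int hα]
        _ = C₀ / α * Real.exp (-α * |r|) := by
            rw [abs_of_nonpos hr]; ring_nf
    · have hGr : G r = -∫ s in Set.Ioi r, B s := by
        have := intervalIntegral.integral_Iic_add_Ioi (b := r) hBint.integrableOn hBint.integrableOn
        rw [hcomp] at this
        linarith [this]
      have hb : ∀ x ∈ Set.Ioi r, ‖B x‖ ≤ C₀ * Real.exp (-(α * x)) := by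
        intro x hx
        simp only [Set.mem_Ioi] at hx
        have h := hBdecay x
        rw [abs_of_nonneg (hr.trans hx.le)] at h
        rw [Real.norm_eq_abs, show -(α * x) = -α * x by ring]
        exact h
      have h1 : ‖∫ s in Set.Ioi r, B s‖ ≤ ∫ x in Set.Ioi r, C₀ * Real.exp (-(α * x)) := by
        refine norm_integral_le_of_norm_le ((expIoi_intOn hα r).const_mul C₀) ?_
        exact (ae_restrict_iff' measurableSet_Ioi).2 (ae_of_all _ hb)
      rw [Real.norm_eq_abs] at h1
      calc |G r| = |∫ s in Set.Ioi r, B s| := by rw [hGr, abs_neg]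
        _ ≤ ∫ x in Set.Ioi r, C₀ * Real.exp (-(α * x)) := h1
        _ = C₀ * (Real.exp (-(α * r)) / α) := by rw [integral_const_mul, expIoi_int hα]
        _ = C₀ / α * Real.exp (-α * |r|) := by rw [abs_of_nonneg hr]; ring_nf
  -- the integrand g
  set g : ℝ → ℝ := fun r => (a r)⁻¹ * G r with hgdef
  have hgcont : Continuous g := (haC.inv₀ hane).mul hGcont
  have hgbound : ∀ r, |g r| ≤ m⁻¹ * (C₀ / α * Real.exp (-α * |r|)) := by
    intro r
    rw [hgdef, abs_mul]
    have h1 : |(a r)⁻¹| ≤ m⁻¹ := by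
      rw [abs_of_pos (inv_pos.mpr (lt_of_lt_of_le hm (habdd r).1))]
      exact inv_anti₀ hm (habdd r).1
    exact mul_le_mul h1 (hGbound r) (abs_nonneg _) (inv_nonneg.mpr hm.le)
  have hgint : Integrable g := by
    refine (((expabs_int hα).const_mul (C₀ / α)).const_mul m⁻¹).mono'
      hgcont.aestronglyMeasurable (ae_of_all _ fun x => ?_)
    simpa [mul_assoc] using hgbound x
  -- derivative of wstar
  have hweq : wstar = fun ρ => ∫ r in (0:ℝ)..ρ, g r := funext hwstar
  have hwderiv : ∀ ρ, HasDerivAt wstar (g ρ) ρ := by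
    intro ρ
    rw [hweq]
    exact intervalIntegral.integral_hasDerivAt_right hgint.intervalIntegrable
      hgcont.stronglyMeasurable.stronglyMeasurableAtFilter hgcont.continuousAt
  have hwderiv' : deriv wstar = g := funext fun ρ => (hwderiv ρ).deriv
  -- boundedness of wstar
  have habs_int : Integrable (fun x => |g x|) := hgint.abs
  have hwbdd : ∀ ρ, |wstar ρ| ≤ ∫ x : ℝ, |g x| := by
    intro ρ
    rw [hwstar ρ]
    have key : ∀ u v : ℝ, u ≤ v → |∫ r in u..v, g r| ≤ ∫ x : ℝ, |g x| := by
      intro u v huv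
      refine (intervalIntegral.abs_integral_le_integral_abs huv).trans ?_
      rw [intervalIntegral.integral_of_le huv]
      exact setIntegral_le_integral habs_int (ae_of_all _ fun x => abs_nonneg _)
    rcases le_total (0:ℝ) ρ with h | h
    · exact key 0 ρ h
    · rw [intervalIntegral.integral_symm, abs_neg]
      exact key ρ 0 h
  -- G is C^1
  have hGdiff : Differentiable ℝ G := fun r => (hGderiv r).differentiableAt
  have hGC1 : ContDiff ℝ 1 G := by
    rw [contDiff_one_iff_deriv]
    refine ⟨hGdiff, ?_⟩
    have : deriv G = B := funext fun r => (hGderiv r).deriv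
    rw [this]; exact hB
  have hgC1 : ContDiff ℝ 1 g := (ha.inv hane).mul hGC1
  -- wstar is C^2
  have hwC2 : ContDiff ℝ 2 wstar := by
    rw [show ((2 : WithTop ℕ∞)) = 1 + 1 from rfl, contDiff_succ_iff_deriv]
    refine ⟨fun ρ => (hwderiv ρ).differentiableAt, by simp, ?_⟩
    rw [hwderiv']
    exact hgC1
  -- the equation
  have hkey : (fun r => a r * deriv wstar r) = G := by
    funext r
    rw [hwderiv', hgdef]
    exact mul_inv_cancel_left₀ (hane r) (G r)
  have hweqn : ∀ ρ, deriv (fun r => a r * deriv wstar r) ρ = B ρ := by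
    intro ρ
    rw [hkey]
    exact (hGderiv ρ).deriv
  refine ⟨⟨⟨∫ x : ℝ, |g x|, hwbdd⟩, hwC2, hweqn⟩, ?_⟩
  -- uniqueness part
  rintro w ⟨Cw, hCw⟩ hw2 hwode
  rw [show ((2 : WithTop ℕ∞)) = 1 + 1 from rfl, contDiff_succ_iff_deriv] at hw2
  obtain ⟨hwdiff, -, hw2'⟩ := hw2
  have hPdiff : Differentiable ℝ (fun r => a r * deriv w r) :=
    (ha.differentiable one_ne_zero).mul (hw2'.differentiable one_ne_zero)
  have hQdiff : Differentiable ℝ (fun r => a r * deriv wstar r) := by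
    rw [hkey]; exact hGdiff
  have hFdiff : Differentiable ℝ (fun r => a r * deriv w r - a r * deriv wstar r) :=
    hPdiff.sub hQdiff
  have hF0 : ∀ x, deriv (fun r => a r * deriv w r - a r * deriv wstar r) x = 0 := by
    intro x
    rw [deriv_fun_sub (hPdiff x) (hQdiff x), hwode x, hweqn x, sub_self]
  set k : ℝ := a 0 * deriv w 0 - a 0 * deriv wstar 0 with hkdef
  have hFconst : ∀ x, a x * deriv w x - a x * deriv wstar x = k := by
    intro x
    have h := is_const_of_deriv_eq_zero hFdiff hF0 x 0
    simpa using h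
  have hdw : ∀ x, deriv w x - deriv wstar x = k * (a x)⁻¹ := by
    intro x
    have h1 : a x * (deriv w x - deriv wstar x) = k := by
      rw [mul_sub]; exact hFconst x
    calc deriv w x - deriv wstar x
        = (a x)⁻¹ * (a x * (deriv w x - deriv wstar x)) := by
          rw [inv_mul_cancel_left₀ (hane x)]
      _ = (a x)⁻¹ * k := by rw [h1]
      _ = k * (a x)⁻¹ := mul_comm _ _
  have hu : ∀ x, HasDerivAt (fun r => w r - wstar r) (k * (a x)⁻¹) x := by
    intro x
    have h := ((hwdiff x).hasDerivAt).sub (hwderiv x)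
    have h2 : deriv w x - g x = k * (a x)⁻¹ := by
      rw [← hwderiv']; exact hdw x
    rwa [h2] at h
  have hcontinv : Continuous fun r : ℝ => k * (a r)⁻¹ := continuous_const.mul (haC.inv₀ hane)
  have hftc : ∀ x : ℝ, (∫ r in (0:ℝ)..x, k * (a r)⁻¹) = (w x - wstar x) - (w 0 - wstar 0) := by
    intro x
    exact intervalIntegral.integral_eq_sub_of_hasDerivAt (fun t _ => hu t)
      (hcontinv.intervalIntegrable 0 x)
  have hk0 : k = 0 := by
    by_contra hk
    have hM : 0 < M := hm.trans_le hmM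
    set Ig : ℝ := ∫ x : ℝ, |g x| with hIg
    set D : ℝ := Cw + Ig + |w 0 - wstar 0| with hD
    set x : ℝ := M * (D + 1) / |k| with hx
    have hkpos : 0 < |k| := abs_pos.mpr hk
    have hIg0 : 0 ≤ Ig := integral_nonneg fun t => abs_nonneg _
    have hCw0 : 0 ≤ Cw := (abs_nonneg (w 0)).trans (hCw 0)
    have hD0 : 0 ≤ D := by
      have := abs_nonneg (w 0 - wstar 0)
      rw [hD]; linarith
    have hxpos : 0 < x := by rw [hx]; positivity
    have hintge : x * M⁻¹ ≤ ∫ r in (0:ℝ)..x, (a r)⁻¹ := by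
      have hmono := intervalIntegral.integral_mono_on (f := fun _ : ℝ => M⁻¹)
        (g := fun r => (a r)⁻¹) hxpos.le (intervalIntegrable_const : IntervalIntegrable (fun _ : ℝ => M⁻¹) volume 0 x)
        ((haC.inv₀ hane).intervalIntegrable 0 x)
        (fun t _ => inv_anti₀ (lt_of_lt_of_le hm (habdd t).1) (habdd t).2)
      simpa [mul_comm] using hmono
    have h1 : D + 1 ≤ |w x - wstar x - (w 0 - wstar 0)| := by
      rw [← hftc x, intervalIntegral.integral_const_mul, abs_mul]
      have hint0 : (0:ℝ) ≤ ∫ r in (0:ℝ)..x, (a r)⁻¹ :=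
        le_trans (by positivity) hintge
      rw [abs_of_nonneg hint0]
      have : D + 1 = |k| * (x * M⁻¹) := by
        rw [hx]; field_simp
      rw [this]
      exact mul_le_mul_of_nonneg_left hintge hkpos.le
    have h2 : |w x - wstar x - (w 0 - wstar 0)| ≤ D := by
      have e1 := abs_le.mp (hCw x)
      have e2 := abs_le.mp (hwbdd x)
      have e3a : -(|w 0 - wstar 0|) ≤ w 0 - wstar 0 := neg_abs_le _
      have e3b : w 0 - wstar 0 ≤ |w 0 - wstar 0| := le_abs_self _
      rw [abs_le]
      constructor <;> [linarith [e1.1, e2.1, e1.2, e2.2]; linarith [e1.1, e2.1, e1.2, e2.2]]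
    linarith
  refine ⟨w 0 - wstar 0, fun ρ => ?_⟩
  have hu0 : ∀ y, deriv (fun r => w r - wstar r) y = 0 := by
    intro y
    rw [(hu y).deriv, hk0, zero_mul]
  have hudiff : Differentiable ℝ fun r => w r - wstar r :=
    fun y => (hu y).differentiableAt
  have h := is_const_of_deriv_eq_zero hudiff hu0 ρ 0
  linarith
end
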